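/- arXiv:1601.00043 — 8 statements merged into one kernel-verified Lean document; each statement's English description precedes it below -/
import Mathlib

section
/- For any two sets 𝒯₀, 𝒯₁ of complete first-order theories in a fixed language, the E-closure of their union equals the union of their E-closures: Cl_E(𝒯₀ ∪ 𝒯₁) = Cl_E(𝒯₀) ∪ Cl_E(𝒯₁). -/
open FirstOrder

/-- The E-closure of a family of theories: the family itself together with all
maximal (complete) theories each of whose sentences belongs to infinitely many
members of the family (Proposition 2.2 of the paper). -/
def ClE {L : Language} (𝒯 : Set L.Theory) : Set L.Theory :=
  𝒯 ∪ {T | T.IsMaximal ∧ ∀ φ ∈ T, {T' ∈ 𝒯 | φ ∈ T'}.Infinite}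

/-!
A theory in the closure of `𝒯₀ ∪ 𝒯₁` but in neither closure would contain sentences `φ₀`, `φ₁`
lying in only finitely many members of `𝒯₀`, resp. `𝒯₁`. Since the members are complete, a member
containing `φ₀ ∧ φ₁` contains both, so `φ₀ ∧ φ₁` — which belongs to the theory by completeness —
lies in only finitely many members of `𝒯₀ ∪ 𝒯₁`.
-/

open FirstOrder.Language

theorem FirstOrder.Language.Theory.IsMaximal.inf_mem_iff {L : Language} {T : L.Theory}
    (hT : T.IsMaximal) {φ ψ : L.Sentence} : φ ⊓ ψ ∈ T ↔ φ ∈ T ∧ ψ ∈ T := by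
  simp only [hT.mem_iff_models, Theory.models_sentence_iff, Sentence.Realize, Formula.realize_inf,
    forall_and]

section

variable {L : Language}

theorem ClE_mono {𝒯 𝒮 : Set L.Theory} (h : 𝒯 ⊆ 𝒮) : ClE 𝒯 ⊆ ClE 𝒮 := by
  rintro T (hT | ⟨hmax, hlim⟩)
  · exact Or.inl (h hT)
  · exact Or.inr ⟨hmax, fun φ hφ => (hlim φ hφ).mono fun T' hT' => ⟨h hT'.1, hT'.2⟩⟩

theorem sep_inf_mem_union_subset {𝒯₀ 𝒯₁ : Set L.Theory} (h₀ : ∀ T ∈ 𝒯₀, T.IsMaximal)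
    (h₁ : ∀ T ∈ 𝒯₁, T.IsMaximal) (φ₀ φ₁ : L.Sentence) :
    {T ∈ 𝒯₀ ∪ 𝒯₁ | φ₀ ⊓ φ₁ ∈ T} ⊆ {T ∈ 𝒯₀ | φ₀ ∈ T} ∪ {T ∈ 𝒯₁ | φ₁ ∈ T} := by
  rintro T ⟨hT₀ | hT₁, hφ⟩
  · exact Or.inl ⟨hT₀, ((h₀ T hT₀).inf_mem_iff.1 hφ).1⟩
  · exact Or.inr ⟨hT₁, ((h₁ T hT₁).inf_mem_iff.1 hφ).2⟩

theorem forall_infinite_or_of_union {𝒯₀ 𝒯₁ : Set L.Theory} (h₀ : ∀ T ∈ 𝒯₀, T.IsMaximal)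
    (h₁ : ∀ T ∈ 𝒯₁, T.IsMaximal) {T : L.Theory} (hT : T.IsMaximal)
    (hlim : ∀ φ ∈ T, {T' ∈ 𝒯₀ ∪ 𝒯₁ | φ ∈ T'}.Infinite) :
    (∀ φ ∈ T, {T' ∈ 𝒯₀ | φ ∈ T'}.Infinite) ∨ (∀ φ ∈ T, {T' ∈ 𝒯₁ | φ ∈ T'}.Infinite) := by
  by_contra! ⟨⟨φ₀, hφ₀, hfin₀⟩, ⟨φ₁, hφ₁, hfin₁⟩⟩
  exact hlim _ (hT.inf_mem_iff.2 ⟨hφ₀, hφ₁⟩)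
    ((hfin₀.union hfin₁).subset (sep_inf_mem_union_subset h₀ h₁ φ₀ φ₁))

end

/-- Theorem 2.3: the E-closure of a union is the union of the E-closures. -/
theorem ClE_union {L : Language} (𝒯₀ 𝒯₁ : Set L.Theory)
    (h₀ : ∀ T ∈ 𝒯₀, T.IsMaximal) (h₁ : ∀ T ∈ 𝒯₁, T.IsMaximal) :
    ClE (𝒯₀ ∪ 𝒯₁) = ClE 𝒯₀ ∪ ClE 𝒯₁ := by
  refine (Set.union_subset (ClE_mono Set.subset_union_left)
    (ClE_mono Set.subset_union_right)).antisymm' ?_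
  rintro T ((hT₀ | hT₁) | ⟨hT, hlim⟩)
  · exact Or.inl (Or.inl hT₀)
  · exact Or.inr (Or.inl hT₁)
  · exact (forall_infinite_or_of_union h₀ h₁ hT hlim).imp (fun h => Or.inr ⟨hT, h⟩)
      (fun h => Or.inr ⟨hT, h⟩)
end

section
/- The E-closure operator is idempotent: Cl_E(Cl_E(𝒯)) = Cl_E(𝒯) for every set 𝒯 of complete theories. -/
open FirstOrder

/-- If only finitely many members of `𝒯` contain `φ`, then no added theory contains `φ`,
so the members of `ClE 𝒯` containing `φ` are exactly those of `𝒯`. -/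
theorem infinite_mem_of_infinite_mem_ClE {L : Language} {𝒯 : Set L.Theory}
    {φ : L.Sentence} (hφ : {T ∈ ClE 𝒯 | φ ∈ T}.Infinite) :
    {T ∈ 𝒯 | φ ∈ T}.Infinite := by
  by_contra hfin
  refine hφ (Set.not_infinite.mp hfin |>.subset ?_)
  rintro T ⟨hT | ⟨-, hT⟩, hφT⟩
  · exact ⟨hT, hφT⟩
  · exact absurd (hT φ hφT) hfin

theorem ClE_idem_general {L : Language} (𝒯 : Set L.Theory) :
    ClE (ClE 𝒯) = ClE 𝒯 := by
  refine subset_antisymm ?_ Set.subset_union_left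
  rintro T (hT | ⟨hmax, hinf⟩)
  · exact hT
  · exact Or.inr ⟨hmax, fun φ hφ => infinite_mem_of_infinite_mem_ClE (hinf φ hφ)⟩

/-- The E-closure operator is idempotent. -/
theorem ClE_idem {L : Language} (𝒯 : Set L.Theory)
    (h : ∀ T ∈ 𝒯, T.IsMaximal) :
    ClE (ClE 𝒯) = ClE 𝒯 :=
  ClE_idem_general 𝒯
end

section
/- Let 𝒯₀ be an E-closed set of complete theories and 𝒯'₀ ⊆ 𝒯₀ a generating set (i.e. Cl_E(𝒯'₀) = 𝒯₀). Then 𝒯'₀ is a minimal generating set if and only if every theory T ∈ 𝒯'₀ is isolated in 𝒯'₀ by some sentence, i.e. there exists φ ∈ T with {T' ∈ 𝒯'₀ : φ ∈ T'} = {T}. -/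
open FirstOrder

/-!
A theory `T` of a family `𝒯` is either isolated in `𝒯` by a sentence, or each of its sentences
lies in infinitely many members of `𝒯`: if some `φ ∈ T` lies in only finitely many, conjoin `φ`
with sentences of `T` separating it from each of the other ones. Removing a theory of the second
kind from a generating set does not change its E-closure, while an isolated theory can never be
recovered from a proper subfamily, since its isolating sentence lies in no other member.
-/

namespace FirstOrder.Language.Theory

variable {L : Language} {T T' : L.Theory}

theorem IsMaximal.top_mem (hT : T.IsMaximal) : (⊤ : L.Sentence) ∈ T :=
  hT.mem_of_models (models_sentence_iff.2 fun _ => Sentence.realize_top _)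

theorem IsMaximal.inf_mem_iff_s7 (hT : T.IsMaximal) {φ ψ : L.Sentence} :
    φ ⊓ ψ ∈ T ↔ φ ∈ T ∧ ψ ∈ T := by
  simp only [hT.mem_iff_models, models_sentence_iff, Sentence.Realize, Formula.realize_inf,
    forall_and]

theorem IsMaximal.eq_of_subset (hT : T.IsMaximal) (hT' : T'.IsSatisfiable) (h : T ⊆ T') :
    T = T' := by
  refine h.antisymm fun φ hφ => (hT.mem_or_not_mem φ).resolve_right fun hnφ => ?_
  obtain ⟨M⟩ := hT'
  exact (Sentence.realize_not M).1 (realize_sentence_of_mem T' (h hnφ))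
    (realize_sentence_of_mem T' hφ)

theorem IsMaximal.exists_mem_notMem_of_ne (hT : T.IsMaximal) (hT' : T'.IsMaximal) (hne : T ≠ T') :
    ∃ φ ∈ T, φ ∉ T' :=
  Set.not_subset.1 fun h => hne (hT.eq_of_subset hT'.1 h)

theorem IsMaximal.exists_mem_forall_notMem {F : Set L.Theory} (hT : T.IsMaximal) (hF : F.Finite)
    (hFmax : ∀ T' ∈ F, T'.IsMaximal) (hTF : T ∉ F) : ∃ ψ ∈ T, ∀ T' ∈ F, ψ ∉ T' := by
  induction F, hF using Set.Finite.induction_on with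
  | empty => exact ⟨⊤, hT.top_mem, fun _ h => h.elim⟩
  | @insert T₁ F _ _ ih =>
    obtain ⟨ψ, hψ, hψF⟩ := ih (fun T' h => hFmax T' (Set.mem_insert_of_mem _ h))
      (fun h => hTF (Set.mem_insert_of_mem _ h))
    have hT₁ := hFmax T₁ (Set.mem_insert _ _)
    obtain ⟨χ, hχ, hχT₁⟩ := hT.exists_mem_notMem_of_ne hT₁ fun h => hTF (h ▸ Set.mem_insert _ _)
    refine ⟨ψ ⊓ χ, hT.inf_mem_iff_s7.2 ⟨hψ, hχ⟩, ?_⟩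
    rintro T' (rfl | hT'F) hmem
    · exact hχT₁ (hT₁.inf_mem_iff_s7.1 hmem).2
    · exact hψF T' hT'F ((hFmax T' (Set.mem_insert_of_mem _ hT'F)).inf_mem_iff_s7.1 hmem).1

end FirstOrder.Language.Theory

open FirstOrder.Language

section EClosure

variable {L : Language} {𝒮 𝒯 : Set L.Theory} {T : L.Theory}

def IsIsolatedIn (𝒯 : Set L.Theory) (T : L.Theory) : Prop :=
  ∃ φ ∈ T, {T' ∈ 𝒯 | φ ∈ T'} = {T}

def accumulationSet (𝒯 : Set L.Theory) : Set L.Theory :=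
  {T | T.IsMaximal ∧ ∀ φ ∈ T, {T' ∈ 𝒯 | φ ∈ T'}.Infinite}

theorem ClE_eq_union_accumulationSet : ClE 𝒯 = 𝒯 ∪ accumulationSet 𝒯 :=
  rfl

theorem accumulationSet_mono (h : 𝒮 ⊆ 𝒯) : accumulationSet 𝒮 ⊆ accumulationSet 𝒯 :=
  fun _ ⟨hmax, hinf⟩ => ⟨hmax, fun φ hφ => (hinf φ hφ).mono fun _ hT' => ⟨h hT'.1, hT'.2⟩⟩

theorem accumulationSet_sdiff_singleton : accumulationSet (𝒯 \ {T}) = accumulationSet 𝒯 := by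
  refine (accumulationSet_mono Set.sdiff_subset).antisymm fun T' ⟨hmax, hinf⟩ => ⟨hmax, ?_⟩
  intro φ hφ
  have : {T'' ∈ 𝒯 \ {T} | φ ∈ T''} = {T'' ∈ 𝒯 | φ ∈ T''} \ {T} := by
    ext; simp only [Set.mem_sdiff, Set.mem_ofPred_eq, Set.mem_singleton_iff]; tauto
  rw [this]
  exact (hinf φ hφ).sdiff (Set.finite_singleton T)

theorem ClE_sdiff_singleton (hT : T ∈ accumulationSet 𝒯) : ClE (𝒯 \ {T}) = ClE 𝒯 := by
  rw [ClE_eq_union_accumulationSet, ClE_eq_union_accumulationSet, accumulationSet_sdiff_singleton]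
  ext T'
  by_cases h : T' = T <;> simp [h, hT]

theorem isIsolatedIn_of_finite (h𝒯 : ∀ T' ∈ 𝒯, T'.IsMaximal) (hT : T ∈ 𝒯) {φ : L.Sentence}
    (hφ : φ ∈ T) (hfin : {T' ∈ 𝒯 | φ ∈ T'}.Finite) : IsIsolatedIn 𝒯 T := by
  obtain ⟨ψ, hψ, hψF⟩ := (h𝒯 T hT).exists_mem_forall_notMem (hfin.sdiff (t := {T}))
    (fun T' hT' => h𝒯 T' hT'.1.1) (fun h => h.2 rfl)
  have hφψ : φ ⊓ ψ ∈ T := (h𝒯 T hT).inf_mem_iff_s7.2 ⟨hφ, hψ⟩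
  refine ⟨φ ⊓ ψ, hφψ, Set.eq_singleton_iff_unique_mem.2 ⟨⟨hT, hφψ⟩, ?_⟩⟩
  rintro T' ⟨hT'𝒯, hmem⟩
  obtain ⟨hφT', hψT'⟩ := (h𝒯 T' hT'𝒯).inf_mem_iff_s7.1 hmem
  by_contra hne
  exact hψF T' ⟨⟨hT'𝒯, hφT'⟩, hne⟩ hψT'

theorem mem_accumulationSet_iff_not_isIsolatedIn (h𝒯 : ∀ T' ∈ 𝒯, T'.IsMaximal) (hT : T ∈ 𝒯) :
    T ∈ accumulationSet 𝒯 ↔ ¬ IsIsolatedIn 𝒯 T := by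
  constructor
  · rintro ⟨-, hinf⟩ ⟨φ, hφ, hiso⟩
    exact hinf φ hφ (hiso ▸ Set.finite_singleton T)
  · intro hiso
    exact ⟨h𝒯 T hT, fun φ hφ hfin => hiso (isIsolatedIn_of_finite h𝒯 hT hφ hfin)⟩

end EClosure

theorem minimal_generating_iff_isolated_general {L : Language}
    (𝒯₀ 𝒯'₀ : Set L.Theory)
    (hcomp : ∀ T ∈ 𝒯₀, T.IsMaximal)
    (hgen : ClE 𝒯'₀ = 𝒯₀) :
    (∀ S ⊂ 𝒯'₀, ClE S ≠ 𝒯₀) ↔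
      (∀ T ∈ 𝒯'₀, ∃ φ ∈ T, {T' ∈ 𝒯'₀ | φ ∈ T'} = {T}) := by
  have hsub : 𝒯'₀ ⊆ 𝒯₀ := hgen ▸ Set.subset_union_left
  have hmax : ∀ T ∈ 𝒯'₀, T.IsMaximal := fun T hT => hcomp T (hsub hT)
  constructor
  · intro hmin T hT
    by_contra hiso
    have hacc := (mem_accumulationSet_iff_not_isIsolatedIn hmax hT).2 hiso
    exact hmin _ (Set.sdiff_singleton_ssubset.2 hT) (by rw [ClE_sdiff_singleton hacc, hgen])
  · intro hiso S hS hSgen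
    obtain ⟨T, hT, hTS⟩ := Set.exists_of_ssubset hS
    rcases (hSgen ▸ hsub hT : T ∈ ClE S) with hTS' | hacc
    · exact hTS hTS'
    · exact (mem_accumulationSet_iff_not_isIsolatedIn hmax hT).1
        (accumulationSet_mono hS.subset hacc) (hiso T hT)

/-- Theorem 3.2, (2) ⇔ (3): a generating set of an E-closed set is minimal iff
each of its theories is isolated inside it by a sentence. -/
theorem minimal_generating_iff_isolated {L : Language}
    (𝒯₀ 𝒯'₀ : Set L.Theory)
    (hcomp : ∀ T ∈ 𝒯₀, T.IsMaximal)
    (hclosed : ClE 𝒯₀ = 𝒯₀)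
    (hsub : 𝒯'₀ ⊆ 𝒯₀)
    (hgen : ClE 𝒯'₀ = 𝒯₀) :
    (∀ S ⊂ 𝒯'₀, ClE S ≠ 𝒯₀) ↔
      (∀ T ∈ 𝒯'₀, ∃ φ ∈ T, {T' ∈ 𝒯'₀ | φ ∈ T'} = {T}) :=
  minimal_generating_iff_isolated_general 𝒯₀ 𝒯'₀ hcomp hgen
end

section
/- Let I₀ be an infinite index set and F a family of subsets of I₀. Define J ∈ Cl(F) iff J ∈ F or for every finite J₀ ⊆ I₀ there are infinitely many I ∈ F with I ∩ J₀ = J ∩ J₀. If F' ⊆ F is an infinite chain under inclusion and J = ⋃ F' (or J = ⋂ F') with J ∉ F, then J ∈ Cl(F). -/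
/-!
A chain whose union is not a member has no largest element, so above any member there are
infinitely many more. The finitely many points of `(⋃₀ F') ∩ J₀` all lie in one member `I` of
the chain, and every member above `I` agrees with `⋃₀ F'` on `J₀`. Intersections are the same
argument applied to the chain of complements.
-/

/-- Combinatorial closure on families of index sets (Corollary 4.7 of the paper):
`J` is in the closure of `F` iff `J ∈ F` or for every finite `J₀` infinitely many
members of `F` agree with `J` on `J₀`. -/
def Cl {I₀ : Type*} (F : Set (Set I₀)) : Set (Set I₀) :=
  F ∪ {J | ∀ J₀ : Finset I₀, {I ∈ F | I ∩ ↑J₀ = J ∩ ↑J₀}.Infinite}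

theorem IsChain.supClosed {α : Type*} [Lattice α] {s : Set α} (hs : IsChain (· ≤ ·) s) :
    SupClosed s := by
  intro a ha b hb
  rcases hs.total ha hb with hab | hba
  · rwa [sup_of_le_right hab]
  · rwa [sup_of_le_left hba]

theorem IsChain.infinite_setOf_le_of_sSup_notMem {α : Type*} [CompleteLattice α] {C : Set α}
    (hC : IsChain (· ≤ ·) C) (hsup : sSup C ∉ C) {a : α} (ha : a ∈ C) :
    {b ∈ C | a ≤ b}.Infinite := by
  intro hfin
  have hmem : sSup {b ∈ C | a ≤ b} ∈ C :=
    hC.supClosed.sSup_mem_of_nonempty hfin ⟨a, ha, le_rfl⟩ (Set.sep_subset _ _)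
  have heq : sSup C = sSup {b ∈ C | a ≤ b} := by
    refine le_antisymm (sSup_le fun b hb => ?_) (sSup_le_sSup (Set.sep_subset _ _))
    rcases hC.total ha hb with hab | hba
    · exact le_sSup ⟨hb, hab⟩
    · exact hba.trans (le_sSup ⟨ha, le_rfl⟩)
  exact hsup (heq ▸ hmem)

theorem IsChain.infinite_setOf_inter_eq_sUnion_inter {α : Type*} {C : Set (Set α)}
    (hC : IsChain (· ⊆ ·) C) (hne : C.Nonempty) (hU : ⋃₀ C ∉ C) {s : Set α} (hs : s.Finite) :
    {K ∈ C | K ∩ s = ⋃₀ C ∩ s}.Infinite := by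
  obtain ⟨I, hI, hsI⟩ := hC.directedOn.exists_mem_subset_of_finite_of_subset_sUnion hne
    (hs.inter_of_right _) Set.inter_subset_left
  refine (hC.infinite_setOf_le_of_sSup_notMem hU hI).mono ?_
  rintro K ⟨hK, hIK : I ⊆ K⟩
  exact ⟨hK, (Set.inter_subset_inter_left _ (Set.subset_sUnion_of_mem hK)).antisymm
    fun x hx => ⟨hIK (hsI hx), hx.2⟩⟩

theorem Set.inter_eq_inter_of_compl_inter_eq {α : Type*} {a b s : Set α}
    (h : aᶜ ∩ s = bᶜ ∩ s) : a ∩ s = b ∩ s := by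
  ext x
  have hx := congrArg (x ∈ ·) h
  simp only [Set.mem_inter_iff, Set.mem_compl_iff, eq_iff_iff] at hx ⊢
  tauto

theorem IsChain.infinite_setOf_inter_eq_sInter_inter {α : Type*} {C : Set (Set α)}
    (hC : IsChain (· ⊆ ·) C) (hne : C.Nonempty) (hInter : ⋂₀ C ∉ C) {s : Set α} (hs : s.Finite) :
    {K ∈ C | K ∩ s = ⋂₀ C ∩ s}.Infinite := by
  have hCc : IsChain (· ⊆ ·) (compl '' C) :=
    hC.symm.image_of_map_rel _ _ _ fun _ _ h => Set.compl_subset_compl.mpr h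
  have hUc : ⋃₀ (compl '' C) ∉ compl '' C := by
    rwa [← Set.compl_sInter, compl_injective.mem_set_image]
  refine Set.Infinite.of_image compl <|
    (hCc.infinite_setOf_inter_eq_sUnion_inter (hne.image _) hUc hs).mono ?_
  rintro _ ⟨⟨K, hK, rfl⟩, hKs⟩
  rw [← Set.compl_sInter] at hKs
  exact ⟨K, ⟨hK, Set.inter_eq_inter_of_compl_inter_eq hKs⟩, rfl⟩

theorem limit_of_chain_mem_Cl_general {I₀ : Type*}
    (F F' : Set (Set I₀)) (J : Set I₀)
    (hsub : F' ⊆ F) (hinf : F'.Infinite) (hchain : IsChain (· ⊆ ·) F')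
    (hJ : J = ⋃₀ F' ∨ J = ⋂₀ F') (hnot : J ∉ F) :
    J ∈ Cl F := by
  have hJF' : J ∉ F' := fun h => hnot (hsub h)
  refine Or.inr fun J₀ => ?_
  have hagree : {I ∈ F' | I ∩ ↑J₀ = J ∩ ↑J₀}.Infinite := by
    rcases hJ with rfl | rfl
    · exact hchain.infinite_setOf_inter_eq_sUnion_inter hinf.nonempty hJF' J₀.finite_toSet
    · exact hchain.infinite_setOf_inter_eq_sInter_inter hinf.nonempty hJF' J₀.finite_toSet
  exact hagree.mono fun I hI => ⟨hsub hI.1, hI.2⟩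

/-- Corollary 4.7, sufficiency: unions and intersections of infinite chains in
`F` which are not in `F` belong to the closure of `F`. -/
theorem limit_of_chain_mem_Cl {I₀ : Type*} [Infinite I₀]
    (F F' : Set (Set I₀)) (J : Set I₀)
    (hsub : F' ⊆ F) (hinf : F'.Infinite) (hchain : IsChain (· ⊆ ·) F')
    (hJ : J = ⋃₀ F' ∨ J = ⋂₀ F') (hnot : J ∉ F) :
    J ∈ Cl F :=
  limit_of_chain_mem_Cl_general F F' J hsub hinf hchain hJ hnot
end

section
/- Let I₀ be an infinite set and F a family of subsets of I₀ linearly ordered by inclusion, such that for every infinite chain F' ⊆ F, neither ⋃ F' nor ⋂ F' belongs to F' unless it is an endpoint of F'. If J ∈ I₀ and J ∉ F, then J ∈ Cl(F) (where J ∈ Cl(F) iff for every finite J₀ ⊆ I₀ infinitely many I ∈ F satisfy I ∩ J₀ = J ∩ J₀) if and only if J = ⋃ F' or J = ⋂ F' for some infinite subset F' ⊆ F. -/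
/-!
If `J ∉ F` is the union of an infinite subchain `F'`, then `F'` has no greatest member, so beyond
a member containing the finitely many relevant points of `J` lie infinitely many members, all
agreeing with `J` there; intersections are dual under complementation.

Conversely, testing `J` on pairs `{x, y}` shows that every member of `F` lies below or above `J`.
Let `L` and `U` be the members below and above `J`; they are disjoint since `J ∉ F`. Members
agreeing with `J` at a point of `J \ ⋃₀ L` lie in `U`, those agreeing at a point of `⋂₀ U \ J`
lie in `L`, so both points cannot exist. If `J ≠ ⋃₀ L` this makes `U` infinite and `J = ⋂₀ U`;
if `L` is finite it gives `J = ⋂₀ U` directly, and `U` is infinite because `F` is.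
-/

open Set

section Order

variable {α : Type*}

theorem IsChain.exists_isGreatest_of_finite [PartialOrder α] {s : Set α}
    (hc : IsChain (· ≤ ·) s) (hs : s.Finite) (hne : s.Nonempty) : ∃ a, IsGreatest s a := by
  obtain ⟨a, ha⟩ := hs.exists_maximal hne
  refine ⟨a, ha.prop, fun b hb => ?_⟩
  rcases hc.total ha.prop hb with hab | hba
  · exact ha.2 hb hab
  · exact hba

theorem IsChain.infinite_sep_le_of_sSup_notMem [CompleteLattice α] {s : Set α}
    (hc : IsChain (· ≤ ·) s) (hs : sSup s ∉ s) {a : α} (ha : a ∈ s) :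
    {b ∈ s | a ≤ b}.Infinite := by
  intro hfin
  obtain ⟨m, hm_mem, hm_ge⟩ :=
    (hc.mono (sep_subset _ _)).exists_isGreatest_of_finite hfin ⟨a, ha, le_rfl⟩
  have hm : IsGreatest s m := ⟨hm_mem.1, fun b hb => (hc.total hb ha).elim
    (fun hba => hba.trans (hm_ge ⟨ha, le_rfl⟩)) fun hab => hm_ge ⟨hb, hab⟩⟩
  exact hs (hm.csSup_eq ▸ hm.1)

end Order

section Sets

variable {α : Type*} {F : Set (Set α)} {I J s : Set α}

theorem mem_iff_mem_of_inter_eq_inter (h : I ∩ s = J ∩ s) {x : α} (hx : x ∈ s) :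
    x ∈ I ↔ x ∈ J := by
  simpa [hx] using congrArg (x ∈ ·) h

theorem compl_inter_eq_compl_inter_iff : Iᶜ ∩ s = Jᶜ ∩ s ↔ I ∩ s = J ∩ s := by
  simp only [Set.ext_iff, mem_inter_iff, mem_compl_iff]
  exact forall_congr' fun x => by tauto

theorem IsChain.infinite_sep_inter_eq_sUnion_inter (hc : IsChain (· ⊆ ·) F) (hinf : F.Infinite)
    (hnot : ⋃₀ F ∉ F) (hs : s.Finite) : {I ∈ F | I ∩ s = ⋃₀ F ∩ s}.Infinite := by
  obtain ⟨I₁, hI₁, hsub⟩ := hc.directedOn.exists_mem_subset_of_finite_of_subset_sUnion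
    hinf.nonempty (hs.inter_of_right _) inter_subset_left
  refine (hc.infinite_sep_le_of_sSup_notMem hnot hI₁).mono ?_
  rintro I ⟨hI, hI₁I⟩
  refine ⟨hI, ?_⟩
  exact subset_antisymm (inter_subset_inter_left _ (subset_sUnion_of_mem hI))
    (subset_inter (hsub.trans hI₁I) inter_subset_right)

theorem IsChain.infinite_sep_inter_eq_sInter_inter (hc : IsChain (· ⊆ ·) F) (hinf : F.Infinite)
    (hnot : ⋂₀ F ∉ F) (hs : s.Finite) : {I ∈ F | I ∩ s = ⋂₀ F ∩ s}.Infinite := by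
  have hc' : IsChain (· ⊆ ·) (compl '' F) :=
    hc.symm.image_of_map_rel _ _ _ fun _ _ h => compl_subset_compl.2 h
  have hnot' : ⋃₀ (compl '' F) ∉ compl '' F := by
    rwa [← compl_sInter, compl_injective.mem_set_image]
  have himage : {I ∈ compl '' F | I ∩ s = ⋃₀ (compl '' F) ∩ s} =
      compl '' {I ∈ F | I ∩ s = ⋂₀ F ∩ s} := by
    ext I
    simp only [← compl_sInter, mem_sep_iff, mem_image]
    constructor
    · rintro ⟨⟨K, hK, rfl⟩, hagree⟩
      exact ⟨K, ⟨hK, compl_inter_eq_compl_inter_iff.1 hagree⟩, rfl⟩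
    · rintro ⟨K, ⟨hK, hagree⟩, rfl⟩
      exact ⟨⟨K, hK, rfl⟩, compl_inter_eq_compl_inter_iff.2 hagree⟩
  have := hc'.infinite_sep_inter_eq_sUnion_inter (hinf.image compl_injective.injOn) hnot' hs
  exact (himage ▸ this).of_image _

theorem IsChain.subset_or_subset_of_forall_finite_nonempty (hc : IsChain (· ⊆ ·) F)
    (hJ : ∀ s : Set α, s.Finite → {I ∈ F | I ∩ s = J ∩ s}.Nonempty) (hI : I ∈ F) :
    I ⊆ J ∨ J ⊆ I := by
  by_contra! h
  obtain ⟨x, hxI, hxJ⟩ := not_subset.1 h.1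
  obtain ⟨y, hyJ, hyI⟩ := not_subset.1 h.2
  obtain ⟨K, hK, hagree⟩ := hJ {x, y} (toFinite _)
  rcases hc.total hI hK with hIK | hKI
  · exact hxJ ((mem_iff_mem_of_inter_eq_inter hagree (by simp)).1 (hIK hxI))
  · exact hyI (hKI ((mem_iff_mem_of_inter_eq_inter hagree (by simp)).2 hyJ))

theorem IsChain.exists_infinite_eq_sUnion_or_eq_sInter (hc : IsChain (· ⊆ ·) F)
    (hJ : ∀ s : Set α, s.Finite → {I ∈ F | I ∩ s = J ∩ s}.Infinite) (hnot : J ∉ F) :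
    ∃ F' ⊆ F, F'.Infinite ∧ (J = ⋃₀ F' ∨ J = ⋂₀ F') := by
  set L := {I ∈ F | I ⊆ J}
  set U := {I ∈ F | J ⊆ I}
  have hcomparable I (hI : I ∈ F) : I ⊆ J ∨ J ⊆ I :=
    hc.subset_or_subset_of_forall_finite_nonempty (fun s hs => (hJ s hs).nonempty) hI
  have hLU {I} (hL : I ∈ L) (hU : I ∈ U) : False :=
    hnot (subset_antisymm hL.2 hU.2 ▸ hL.1)
  have hU_of_mem {x} (hx : x ∉ ⋃₀ L) {I} (hI : I ∈ F) (hxI : x ∈ I) : I ∈ U :=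
    (hcomparable I hI).elim (fun hIJ => absurd ⟨I, ⟨hI, hIJ⟩, hxI⟩ hx) (⟨hI, ·⟩)
  have hL_of_notMem {y} (hy : y ∈ ⋂₀ U) {I} (hI : I ∈ F) (hyI : y ∉ I) : I ∈ L :=
    (hcomparable I hI).elim (fun hIJ => ⟨hI, hIJ⟩) fun hJI => absurd (hy I ⟨hI, hJI⟩) hyI
  by_cases hL : J = ⋃₀ L ∧ L.Infinite
  · exact ⟨L, sep_subset _ _, hL.2, Or.inl hL.1⟩
  suffices U.Infinite ∧ ⋂₀ U ⊆ J from
    ⟨U, sep_subset _ _, this.1, Or.inr (subset_antisymm (subset_sInter fun I hI => hI.2) this.2)⟩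
  rcases not_and_or.1 hL with hJL | hLfin
  · obtain ⟨x, hxJ, hxL⟩ : ∃ x ∈ J, x ∉ ⋃₀ L := by
      by_contra! h
      exact hJL (subset_antisymm h (sUnion_subset fun I hI => hI.2))
    have hUinf : U.Infinite := (hJ {x} (toFinite _)).mono fun I hI =>
      hU_of_mem hxL hI.1 ((mem_iff_mem_of_inter_eq_inter hI.2 (mem_singleton x)).2 hxJ)
    refine ⟨hUinf, fun y hy => ?_⟩
    by_contra hyJ
    obtain ⟨I, hI, hagree⟩ := (hJ {x, y} (toFinite _)).nonempty
    have hxI : x ∈ I := (mem_iff_mem_of_inter_eq_inter hagree (by simp)).2 hxJ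
    have hyI : y ∉ I := fun hyI =>
      hyJ ((mem_iff_mem_of_inter_eq_inter hagree (by simp)).1 hyI)
    exact hLU (hL_of_notMem hy hI hyI) (hU_of_mem hxL hI hxI)
  · have hF : F.Infinite := by simpa using hJ ∅ finite_empty
    have hFLU : F ⊆ L ∪ U := fun I hI =>
      (hcomparable I hI).imp (fun h => ⟨hI, h⟩) fun h => ⟨hI, h⟩
    refine ⟨(infinite_union.1 (hF.mono hFLU)).resolve_left hLfin, fun y hy => ?_⟩
    by_contra hyJ
    refine hLfin ((hJ {y} (toFinite _)).mono fun I hI => hL_of_notMem hy hI.1 fun hyI => ?_)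
    exact hyJ ((mem_iff_mem_of_inter_eq_inter hI.2 (mem_singleton y)).1 hyI)

end Sets

theorem mem_Cl_iff_limit_general {I₀ : Type*}
    (F : Set (Set I₀)) (hchain : IsChain (· ⊆ ·) F)
    (J : Set I₀) (hnot : J ∉ F) :
    J ∈ Cl F ↔ ∃ F' ⊆ F, F'.Infinite ∧ (J = ⋃₀ F' ∨ J = ⋂₀ F') := by
  have hfinite : (∀ J₀ : Finset I₀, {I ∈ F | I ∩ ↑J₀ = J ∩ ↑J₀}.Infinite) ↔
      ∀ s : Set I₀, s.Finite → {I ∈ F | I ∩ s = J ∩ s}.Infinite :=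
    ⟨fun h s hs => by simpa using h hs.toFinset, fun h J₀ => h J₀ J₀.finite_toSet⟩
  rw [Cl, mem_union, or_iff_right hnot, mem_ofPred_eq, hfinite]
  refine ⟨fun h => hchain.exists_infinite_eq_sUnion_or_eq_sInter h hnot, ?_⟩
  rintro ⟨F', hF'F, hinf, hlimit⟩ s hs
  have hc := hchain.mono hF'F
  have hnot' : J ∉ F' := fun h => hnot (hF'F h)
  suffices {I ∈ F' | I ∩ s = J ∩ s}.Infinite from this.mono fun I hI => ⟨hF'F hI.1, hI.2⟩
  rcases hlimit with rfl | rfl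
  · exact hc.infinite_sep_inter_eq_sUnion_inter hinf hnot' hs
  · exact hc.infinite_sep_inter_eq_sInter_inter hinf hnot' hs

/-- Corollary 4.7: for a chain `F` whose infinite subchains attain their union
resp. intersection only as endpoints, a set `J ∉ F` is in the closure iff it is
the union or the intersection of some infinite subfamily of `F`. -/
theorem mem_Cl_iff_limit {I₀ : Type*} [Infinite I₀]
    (F : Set (Set I₀)) (hchain : IsChain (· ⊆ ·) F)
    (hlim : ∀ F' ⊆ F, F'.Infinite →
      (⋃₀ F' ∈ F' → IsGreatest F' (⋃₀ F')) ∧ (⋂₀ F' ∈ F' → IsLeast F' (⋂₀ F')))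
    (J : Set I₀) (hnot : J ∉ F) :
    J ∈ Cl F ↔ ∃ F' ⊆ F, F'.Infinite ∧ (J = ⋃₀ F' ∨ J = ⋂₀ F') :=
  mem_Cl_iff_limit_general F hchain J hnot
end

section
/- Let I₀ be infinite and F ⊆ 𝒫(I₀) linearly ordered by inclusion. Call F discrete if no J ∈ F is an accumulation point of F \ {J}, where J is an accumulation point of G iff for every finite J₀ ⊆ I₀ infinitely many I ∈ G satisfy I ∩ J₀ = J ∩ J₀. If F is discrete, then F is the least generating set for Cl(F): for every G ⊆ Cl(F) with Cl(G) = Cl(F), we have F ⊆ G. -/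
namespace Cl

variable {I₀ : Type*} {F G : Set (Set I₀)} {J : Set I₀}

def IsAccPt (F : Set (Set I₀)) (J : Set I₀) : Prop :=
  ∀ J₀ : Finset I₀, {I ∈ F | I ∩ ↑J₀ = J ∩ ↑J₀}.Infinite

theorem mem_iff : J ∈ Cl F ↔ J ∈ F ∨ IsAccPt F J := Iff.rfl

theorem IsAccPt.diff_singleton (h : IsAccPt F J) (K : Set I₀) : IsAccPt (F \ {K}) J :=
  fun J₀ => ((h J₀).sdiff (Set.finite_singleton K)).mono <| by
    rintro I ⟨⟨hIF, hIeq⟩, hIK⟩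
    exact ⟨⟨hIF, hIK⟩, hIeq⟩

theorem IsAccPt.of_subset_cl (hG : G ⊆ Cl F) (h : IsAccPt G J) : IsAccPt F J := by
  intro J₀
  by_cases hnew : ∃ I ∈ G \ F, I ∩ ↑J₀ = J ∩ ↑J₀
  · obtain ⟨I, ⟨hIG, hIF⟩, hIeq⟩ := hnew
    have hI : IsAccPt F I := (mem_iff.mp (hG hIG)).resolve_left hIF
    rw [← hIeq]
    exact hI J₀
  · refine (h J₀).mono ?_
    rintro I ⟨hIG, hIeq⟩
    exact ⟨by_contra fun hIF => hnew ⟨I, ⟨hIG, hIF⟩, hIeq⟩, hIeq⟩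

end Cl

theorem discrete_least_generating_general {I₀ : Type*}
    (F : Set (Set I₀))
    (hdiscrete : ∀ J ∈ F, ¬ ∀ J₀ : Finset I₀,
      {I ∈ F \ {J} | I ∩ ↑J₀ = J ∩ ↑J₀}.Infinite) :
    ∀ G ⊆ Cl F, Cl G = Cl F → F ⊆ G := by
  intro G hG hCl J hJ
  have hJG : J ∈ Cl G := hCl ▸ Or.inl hJ
  rcases Cl.mem_iff.mp hJG with hmem | hacc
  · exact hmem
  · exact absurd ((hacc.of_subset_cl hG).diff_singleton J) (hdiscrete J hJ)

/-- Proposition 4.8: if the chain `F` is discrete (no member is an accumulation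
point of the others) then `F` is the least generating set for `Cl F`. -/
theorem discrete_least_generating {I₀ : Type*} [Infinite I₀]
    (F : Set (Set I₀)) (hchain : IsChain (· ⊆ ·) F)
    (hdiscrete : ∀ J ∈ F, ¬ ∀ J₀ : Finset I₀,
      {I ∈ F \ {J} | I ∩ ↑J₀ = J ∩ ↑J₀}.Infinite) :
    ∀ G ⊆ Cl F, Cl G = Cl F → F ⊆ G :=
  discrete_least_generating_general F hdiscrete
end

section
/- If ⟨F, ⊆⟩ is a countable dense linear order of subsets of I₀ (between any two distinct comparable members there is a third, and F has at least two elements), then the closure Cl(F) = F ∪ {J : for every finite J₀ ⊆ I₀, infinitely many I ∈ F satisfy I ∩ J₀ = J ∩ J₀} has cardinality at least 2^ℵ₀. -/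
/-!
A dense chain with two distinct members contains a strictly increasing copy `q ↦ g q` of `ℚ`.
For a real `r`, the union of the `g q` with `q < r` (the set `⋃ F⁻` of a cut) lies in `Cl F`:
on a finite `J₀` it agrees with every `g q` for `q` in a whole rational interval just below `r`.
Between two reals lie two rationals `q < q'`, and a point of `g q' \ g q` separates the two
unions, so distinct reals give distinct members of `Cl F`.
-/

open Cardinal

section RatCut

variable {α : Type*} {g : ℚ → Set α} {q : ℚ} {r : ℝ}

def ratCutUnion (g : ℚ → Set α) (r : ℝ) : Set α :=
  ⋃ q ∈ {q : ℚ | (q : ℝ) < r}, g q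

theorem subset_ratCutUnion (hq : (q : ℝ) < r) : g q ⊆ ratCutUnion g r :=
  Set.subset_biUnion_of_mem (u := g) hq

theorem ratCutUnion_subset (hg : Monotone g) (hq : r ≤ q) : ratCutUnion g r ⊆ g q :=
  Set.iUnion₂_subset fun _ hp => hg (by exact_mod_cast (lt_of_lt_of_le hp hq).le)

theorem strictMono_ratCutUnion (hg : StrictMono g) : StrictMono (ratCutUnion g) := by
  intro r r' hrr'
  obtain ⟨q, hrq, hqr'⟩ := exists_rat_btwn hrr'
  obtain ⟨q', hqq', hq'r'⟩ := exists_rat_btwn hqr'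
  obtain ⟨x, hx', hx⟩ := Set.exists_of_ssubset (hg (by exact_mod_cast hqq' : q < q'))
  refine Set.ssubset_iff_subset_ne.2 ⟨?_, fun h => hx ?_⟩
  · exact Set.iUnion₂_subset fun p hp => subset_ratCutUnion (hp.trans hrr')
  · exact ratCutUnion_subset hg.monotone hrq.le (h ▸ subset_ratCutUnion hq'r' hx')

theorem exists_forall_inter_eq_ratCutUnion_inter (hg : Monotone g) (r : ℝ) (s : Finset α) :
    ∃ p : ℚ, (p : ℝ) < r ∧
      ∀ q : ℚ, p ≤ q → (q : ℝ) < r → g q ∩ s = ratCutUnion g r ∩ s := by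
  classical
  have hdir : DirectedOn (fun p q => g p ⊆ g q) {q : ℚ | (q : ℝ) < r} := fun p hp q hq =>
    ⟨max p q, by rw [Set.mem_ofPred_eq, Rat.cast_max]; exact max_lt hp hq,
      hg (le_max_left p q), hg (le_max_right p q)⟩
  obtain ⟨p, hpr, hp⟩ := hdir.exists_mem_subset_of_finset_subset_biUnion
    (exists_rat_lt r) (s := {x ∈ s | x ∈ ratCutUnion g r}) (by
      rw [Finset.coe_filter]; exact fun x hx => hx.2)
  refine ⟨p, hpr, fun q hpq hqr => Set.Subset.antisymm
    (Set.inter_subset_inter_left _ (subset_ratCutUnion hqr)) ?_⟩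
  rintro x ⟨hx, hxs⟩
  exact ⟨hg hpq (hp (Finset.mem_filter.2 ⟨hxs, hx⟩)), hxs⟩

theorem ratCutUnion_mem_Cl {F : Set (Set α)} (hg : StrictMono g) (hgF : ∀ q, g q ∈ F) (r : ℝ) :
    ratCutUnion g r ∈ Cl F := by
  refine Or.inr fun J₀ => ?_
  obtain ⟨p, hpr, hp⟩ := exists_forall_inter_eq_ratCutUnion_inter hg.monotone r J₀
  obtain ⟨q₁, hpq₁, hq₁r⟩ := exists_rat_btwn hpr
  refine ((Set.Ioo_infinite (by exact_mod_cast hpq₁)).image hg.injective.injOn).mono ?_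
  rintro _ ⟨q, hq, rfl⟩
  exact ⟨hgF q, hp q hq.1.le (lt_trans (by exact_mod_cast hq.2) hq₁r)⟩

theorem continuum_le_mk_Cl {F : Set (Set α)} (hg : StrictMono g) (hgF : ∀ q, g q ∈ F) :
    𝔠 ≤ #(Cl F) := by
  have hinj : Function.Injective
      fun r : ℝ => (⟨ratCutUnion g r, ratCutUnion_mem_Cl hg hgF r⟩ : Cl F) :=
    fun r r' h => (strictMono_ratCutUnion hg).injective (congrArg Subtype.val h)
  simpa [Cardinal.mk_real] using Cardinal.lift_mk_le_lift_mk_of_injective hinj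

end RatCut

theorem IsChain.exists_strictMono_rat {β : Type*} [PartialOrder β] {s : Set β}
    (hs : IsChain (· ≤ ·) s) (hdense : ∀ a ∈ s, ∀ b ∈ s, a < b → ∃ c ∈ s, a < c ∧ c < b)
    (hnontriv : s.Nontrivial) : ∃ g : ℚ → β, StrictMono g ∧ ∀ q, g q ∈ s := by
  classical
  let := hs.linearOrder
  have : DenselyOrdered s := ⟨fun a b hab => by
    obtain ⟨c, hc, hac, hcb⟩ := hdense a a.2 b b.2 hab
    exact ⟨⟨c, hc⟩, hac, hcb⟩⟩
  have := hnontriv.coe_sort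
  obtain ⟨e⟩ := Order.embedding_from_countable_to_dense ℚ s
  exact ⟨fun q => e q, fun p q hpq => e.strictMono hpq, fun q => (e q).2⟩

theorem dense_Cl_continuum_general {I₀ : Type*}
    (F : Set (Set I₀)) (hchain : IsChain (· ⊆ ·) F)
    (hdense : ∀ A ∈ F, ∀ B ∈ F, A ⊂ B → ∃ C ∈ F, A ⊂ C ∧ C ⊂ B)
    (hnontriv : ∃ A ∈ F, ∃ B ∈ F, A ≠ B) :
    Cardinal.continuum ≤ Cardinal.mk ↥(Cl F) := by
  obtain ⟨g, hg, hgF⟩ := hchain.exists_strictMono_rat hdense hnontriv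
  exact continuum_le_mk_Cl hg hgF

/-- Proposition 4.9: the closure of a countable dense chain (with infinite
differences) has cardinality at least continuum. -/
theorem dense_Cl_continuum {I₀ : Type*} [Infinite I₀]
    (F : Set (Set I₀)) (hchain : IsChain (· ⊆ ·) F)
    (hcount : F.Countable)
    (hdense : ∀ A ∈ F, ∀ B ∈ F, A ⊂ B → ∃ C ∈ F, A ⊂ C ∧ C ⊂ B)
    (hdiff : ∀ A ∈ F, ∀ B ∈ F, A ⊂ B → (B \ A).Infinite)
    (hnontriv : ∃ A ∈ F, ∃ B ∈ F, A ≠ B) :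
    Cardinal.continuum ≤ Cardinal.mk ↥(Cl F) :=
  dense_Cl_continuum_general F hchain hdense hnontriv
end

section
/- Let F be a family of subsets of an infinite set I₀ linearly ordered by inclusion, and let (F⁻, F⁺) be a cut of F (F = F⁻ ∪ F⁺, F⁻ < F⁺ elementwise, both nonempty) with ⋃ F⁻ strictly contained in ⋂ F⁺ and with some element j* ∈ (⋂ F⁺) \ (⋃ F⁻). Then Cl(F) = Cl(F⁻) ∪ Cl(F⁺), and a set G ⊆ Cl(F) is generating for Cl(F) if and only if G ∩ Cl(F⁻) generates Cl(F⁻) and G ∩ Cl(F⁺) generates Cl(F⁺). -/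
open Set

section

variable {I₀ : Type*}

lemma Cl_mono {F F' : Set (Set I₀)} (h : F ⊆ F') : Cl F ⊆ Cl F' := by
  rintro J (hJ | hJ)
  · exact Or.inl (h hJ)
  · exact Or.inr fun J₀ => (hJ J₀).mono fun I hI => ⟨h hI.1, hI.2⟩

lemma inter_eq_inter_of_subset {I J S A : Set I₀} (hA : A ⊆ S) (h : I ∩ S = J ∩ S) :
    I ∩ A = J ∩ A := by
  rw [← inter_eq_right.mpr hA, ← inter_assoc, h, inter_assoc]

lemma Cl_inter_cylinder (H : Set (Set I₀)) (s : Finset I₀) (T : Set I₀) :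
    Cl (H ∩ {I | I ∩ s = T ∩ s}) = Cl H ∩ {I | I ∩ s = T ∩ s} := by
  ext J
  constructor
  · intro hJ
    refine ⟨Cl_mono inter_subset_left hJ, ?_⟩
    rcases hJ with hJ | hJ
    · exact hJ.2
    · obtain ⟨I, ⟨-, hIT⟩, hIJ⟩ := (hJ s).nonempty
      exact hIJ.symm.trans hIT
  · classical
    rintro ⟨hJ | hJ, hJT⟩
    · exact Or.inl ⟨hJ, hJT⟩
    · refine Or.inr fun J₀ => (hJ (J₀ ∪ s)).mono ?_
      rintro I ⟨hIH, hIJ⟩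
      rw [Finset.coe_union] at hIJ
      exact ⟨⟨hIH, (inter_eq_inter_of_subset subset_union_right hIJ).trans hJT⟩,
        inter_eq_inter_of_subset subset_union_left hIJ⟩

lemma Cl_inter_setOf_mem (H : Set (Set I₀)) (j : I₀) :
    Cl (H ∩ {I | j ∈ I}) = Cl H ∩ {I | j ∈ I} := by
  have hcyl : {I : Set I₀ | I ∩ ↑({j} : Finset I₀) = univ ∩ ↑({j} : Finset I₀)} =
      {I | j ∈ I} := by
    ext I
    simp
  simpa only [hcyl] using Cl_inter_cylinder H {j} univ

lemma Cl_inter_setOf_not_mem (H : Set (Set I₀)) (j : I₀) :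
    Cl (H ∩ {I | j ∈ I}ᶜ) = Cl H ∩ {I | j ∈ I}ᶜ := by
  have hcyl : {I : Set I₀ | I ∩ ↑({j} : Finset I₀) = ∅ ∩ ↑({j} : Finset I₀)} =
      {I | j ∈ I}ᶜ := by
    ext I
    simp
  simpa only [hcyl] using Cl_inter_cylinder H {j} ∅

lemma eq_iff_inter_compl_eq_and_inter_eq {α : Type*} {A B : Set α} (P : Set α) :
    A = B ↔ A ∩ Pᶜ = B ∩ Pᶜ ∧ A ∩ P = B ∩ P := by
  refine ⟨fun h => h ▸ ⟨rfl, rfl⟩, fun ⟨hc, h⟩ => ?_⟩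
  rw [← inter_union_compl A P, ← inter_union_compl B P, hc, h]

end

theorem Cl_cut_split_general {I₀ : Type*}
    (F Fm Fp : Set (Set I₀))
    (hcut : F = Fm ∪ Fp)
    (jstar : I₀) (hjstar : jstar ∈ (⋂₀ Fp) \ (⋃₀ Fm)) :
    Cl F = Cl Fm ∪ Cl Fp ∧
      ∀ G ⊆ Cl F, (Cl G = Cl F ↔
        Cl (G ∩ Cl Fm) = Cl Fm ∧ Cl (G ∩ Cl Fp) = Cl Fp) := by
  set P : Set (Set I₀) := {I | jstar ∈ I}
  have hFm : Fm ⊆ Pᶜ := fun I hI hj => hjstar.2 ⟨I, hI, hj⟩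
  have hFp : Fp ⊆ P := fun I hI => hjstar.1 I hI
  have hClm : Cl Fm = Cl F ∩ Pᶜ := by
    rw [← Cl_inter_setOf_not_mem, hcut, union_inter_distrib_right, inter_eq_left.mpr hFm,
      (disjoint_compl_right.mono_left hFp).inter_eq, union_empty]
  have hClp : Cl Fp = Cl F ∩ P := by
    rw [← Cl_inter_setOf_mem, hcut, union_inter_distrib_right, inter_eq_left.mpr hFp,
      (disjoint_compl_left.mono_left hFm).inter_eq, empty_union]
  refine ⟨by rw [hClm, hClp, ← inter_union_distrib_left, compl_union_self, inter_univ],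
    fun G hG => ?_⟩
  have hGm : G ∩ Cl Fm = G ∩ Pᶜ := by rw [hClm, ← inter_assoc, inter_eq_left.mpr hG]
  have hGp : G ∩ Cl Fp = G ∩ P := by rw [hClp, ← inter_assoc, inter_eq_left.mpr hG]
  rw [hGm, hGp, Cl_inter_setOf_not_mem, Cl_inter_setOf_mem, hClm, hClp]
  exact eq_iff_inter_compl_eq_and_inter_eq P

/-- Proposition 4.14 / Corollary 4.15: for a cut `(F⁻, F⁺)` of the chain `F`
separated by an element `j*`, the closure splits as a union, and generating
sets split accordingly. -/
theorem Cl_cut_split {I₀ : Type*} [Infinite I₀]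
    (F Fm Fp : Set (Set I₀)) (hchain : IsChain (· ⊆ ·) F)
    (hcut : F = Fm ∪ Fp) (hm : Fm.Nonempty) (hp : Fp.Nonempty)
    (hlt : ∀ A ∈ Fm, ∀ B ∈ Fp, A ⊂ B)
    (hssub : ⋃₀ Fm ⊂ ⋂₀ Fp)
    (jstar : I₀) (hjstar : jstar ∈ (⋂₀ Fp) \ (⋃₀ Fm)) :
    Cl F = Cl Fm ∪ Cl Fp ∧
      ∀ G ⊆ Cl F, (Cl G = Cl F ↔
        Cl (G ∩ Cl Fm) = Cl Fm ∧ Cl (G ∩ Cl Fp) = Cl Fp) :=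
  Cl_cut_split_general F Fm Fp hcut jstar hjstar
end
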